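/- Let C be an association scheme, E a scheme equivalence, and X a class of E. For every basis relation R and classes X, Y of E with R_{X,Y} ≠ ∅, one has |R| = |R_{V/E}| · |R_{X,Y}|, where R_{V/E} = {(X',Y') ∈ V/E × V/E : R_{X',Y'} ≠ ∅} and R_{X,Y} = R ∩ (X × Y). -/

import Mathlib

open Set Function

section Defs

variable {V : Type*}

/-- The diagonal relation on `V`. -/
def diag (V : Type*) : Set (V × V) := {x | x.1 = x.2}

/-- The transpose of a relation. -/
def transp (R : Set (V × V)) : Set (V × V) := {x | (x.2, x.1) ∈ R}

/-- Relational composition (product of relations). -/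
def comp (R S : Set (V × V)) : Set (V × V) := {x | ∃ w, (x.1, w) ∈ R ∧ (w, x.2) ∈ S}

/-- The `n`-fold relational power, with `R^0` the diagonal. -/
def relPow (R : Set (V × V)) : ℕ → Set (V × V)
  | 0 => diag V
  | n + 1 => comp (relPow R n) R

/-- `⟨R⟩`, the union of all relational powers of `R`. -/
def gen (R : Set (V × V)) : Set (V × V) := ⋃ i, relPow R i

/-- Strong connectivity: every ordered pair is joined by a directed walk of positive length
(so every vertex has nonempty out-neighborhood). -/
def StronglyConnected (R : Set (V × V)) : Prop :=
  ∀ u v : V, ∃ n, 0 < n ∧ (u, v) ∈ relPow R n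

/-- A digraph `(V, R)` is cyclically `p`-partite: the vertices are partitioned into `p`
nonempty parts indexed by `ZMod p` such that every arc goes from part `r` to part `r + 1`. -/
def CyclicallyPartite (p : ℕ) (R : Set (V × V)) : Prop :=
  ∃ f : V → ZMod p, Surjective f ∧ ∀ u v : V, (u, v) ∈ R → f v = f u + 1

/-- The induced subdigraph on `X ⊆ V` is cyclically `p`-partite. -/
def CyclicallyPartiteOn (p : ℕ) (X : Set V) (R : Set (V × V)) : Prop :=
  ∃ f : V → ZMod p, (∀ r : ZMod p, ∃ v ∈ X, f v = r) ∧
    ∀ u ∈ X, ∀ v ∈ X, (u, v) ∈ R → f v = f u + 1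

/-- The out-neighborhood `R(u)`. -/
def neighb (R : Set (V × V)) (u : V) : Set V := {v | (u, v) ∈ R}

/-- A homogeneous coherent configuration (association scheme) on a finite set `V`. -/
structure AssocScheme (V : Type*) [Fintype V] where
  classes : Set (Set (V × V))
  part : ∀ x : V × V, ∃! R, R ∈ classes ∧ x ∈ R
  nonempty_mem : ∀ R ∈ classes, R.Nonempty
  transp_mem : ∀ R ∈ classes, transp R ∈ classes
  diag_mem : diag V ∈ classes
  inter : ∀ R ∈ classes, ∀ S ∈ classes, ∀ T ∈ classes, ∀ x ∈ T, ∀ y ∈ T,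
    ({w : V | (Prod.fst x, w) ∈ R ∧ (w, Prod.snd x) ∈ S}).ncard =
    ({w : V | (Prod.fst y, w) ∈ R ∧ (w, Prod.snd y) ∈ S}).ncard

/-- A `p`-scheme: every basis relation has cardinality a power of `p`. -/
def IsPScheme (p : ℕ) {V : Type*} [Fintype V] (C : AssocScheme V) : Prop :=
  ∀ R ∈ C.classes, ∃ k : ℕ, R.ncard = p ^ k

/-- A scheme equivalence: a union of basis relations that is an equivalence relation on `V`. -/
def IsSchemeEquiv {V : Type*} [Fintype V] (C : AssocScheme V) (E : Set (V × V)) : Prop :=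
  (∃ D ⊆ C.classes, E = ⋃₀ D) ∧ Equivalence (fun u v : V => (u, v) ∈ E)

/-- The set of classes of an equivalence relation `E` on `V`. -/
def classesOf {V : Type*} (E : Set (V × V)) : Set (Set V) :=
  {X | ∃ u : V, X = {v | (u, v) ∈ E}}

/-- The quotient relation `R_{V/E}` on the set of classes of `E`. -/
def quotRel {V : Type*} (E R : Set (V × V)) : Set (Set V × Set V) :=
  {q | q.1 ∈ classesOf E ∧ q.2 ∈ classesOf E ∧ (R ∩ q.1 ×ˢ q.2).Nonempty}

/-- A maximal scheme equivalence: `E ≠ V × V` and no scheme equivalence other than `V × V`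
properly contains it. -/
def MaximalEquiv {V : Type*} [Fintype V] (C : AssocScheme V) (E : Set (V × V)) : Prop :=
  IsSchemeEquiv C E ∧ E ≠ Set.univ ∧
    ∀ F, IsSchemeEquiv C F → E ⊆ F → F ≠ Set.univ → F = E

end Defs

/-!
Let `Ê` and `R̂` be the 0/1 matrices of `E` and `R`. For `(x, y) ∈ R ∩ X ×ˢ Y`, the block
`R ∩ X ×ˢ Y` has `(Ê * R̂ * Ê) x y` elements. Matrices constant on every basis relation are closed
under multiplication (this is where the intersection numbers enter), and `Ê`, `R̂` are such
matrices because `E` is a union of basis relations; hence all nonempty blocks of `R` have the same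
size. Since `R` is the disjoint union of its nonempty blocks, which are indexed by `R_{V/E}`, the
formula follows.
-/

theorem Set.ncard_eq_ncard_image_mul {α β : Type*} [Finite α] {s : Set α} {f : α → β} {n : ℕ}
    (hn : ∀ b ∈ f '' s, {a ∈ s | f a = b}.ncard = n) : s.ncard = (f '' s).ncard * n := by
  classical
  have := Fintype.ofFinite α
  have hfib : ∀ b ∈ s.toFinset.image f, {a ∈ s.toFinset | f a = b}.card = n := by
    intro b hb
    rw [← hn b (by simpa using hb), Set.ncard_eq_toFinset_card']
    congr 1; ext; simp
  rw [Set.ncard_eq_toFinset_card', Set.ncard_eq_toFinset_card', Set.toFinset_image, mul_comm]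
  exact le_antisymm (Finset.card_le_mul_card_image _ n fun b hb => (hfib b hb).le)
    (Finset.mul_card_image_le_card _ n fun b hb => (hfib b hb).ge)

open Classical in
noncomputable def relMatrix {V : Type*} (A : Set (V × V)) : Matrix V V ℕ :=
  Matrix.of fun x y => if (x, y) ∈ A then 1 else 0

theorem relMatrix_mul_mul_apply {V : Type*} [Fintype V] (A B D : Set (V × V)) (x y : V) :
    (relMatrix A * relMatrix B * relMatrix D) x y =
      {p : V × V | (x, p.1) ∈ A ∧ p ∈ B ∧ (p.2, y) ∈ D}.ncard := by
  classical
  rw [Set.ncard_eq_toFinset_card', Set.toFinset_ofPred, Finset.card_filter,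
    Fintype.sum_prod_type_right]
  simp only [Matrix.mul_apply, Finset.sum_mul, relMatrix, Matrix.of_apply]
  refine Finset.sum_congr rfl fun b _ => Finset.sum_congr rfl fun a _ => ?_
  by_cases h1 : (x, a) ∈ A <;> by_cases h2 : (a, b) ∈ B <;> by_cases h3 : (b, y) ∈ D <;>
    simp [h1, h2, h3]

namespace AssocScheme

variable {V : Type*} [Fintype V] (C : AssocScheme V)

noncomputable def classOf (p : V × V) : Set (V × V) := (C.part p).choose

theorem classOf_mem (p : V × V) : C.classOf p ∈ C.classes := (C.part p).choose_spec.1.1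

theorem mem_classOf (p : V × V) : p ∈ C.classOf p := (C.part p).choose_spec.1.2

variable {C}

theorem classOf_eq_iff {p : V × V} {T : Set (V × V)} (hT : T ∈ C.classes) :
    C.classOf p = T ↔ p ∈ T :=
  ⟨fun h => h ▸ C.mem_classOf p, fun h => ((C.part p).choose_spec.2 T ⟨hT, h⟩).symm⟩

theorem mem_sUnion_iff_classOf_mem {D : Set (Set (V × V))} (hD : D ⊆ C.classes) {p : V × V} :
    p ∈ ⋃₀ D ↔ C.classOf p ∈ D :=
  ⟨fun ⟨_, hT, hp⟩ => (classOf_eq_iff (hD hT)).2 hp ▸ hT, fun h => ⟨_, h, C.mem_classOf p⟩⟩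

variable (C)

/-- The matrices constant on each basis relation, i.e. the `ℕ`-valued elements of the
Bose–Mesner algebra. -/
def IsInvariant (M : Matrix V V ℕ) : Prop :=
  ∀ p q : V × V, C.classOf p = C.classOf q → M p.1 p.2 = M q.1 q.2

variable {C}

theorem isInvariant_relMatrix {D : Set (Set (V × V))} (hD : D ⊆ C.classes) :
    C.IsInvariant (relMatrix (⋃₀ D)) := by
  classical
  rintro ⟨x, y⟩ ⟨x', y'⟩ hpq
  exact if_congr (by rw [mem_sUnion_iff_classOf_mem hD, mem_sUnion_iff_classOf_mem hD, hpq])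
    rfl rfl

theorem isInvariant_ncard_classOf (S T : Set (V × V)) :
    C.IsInvariant
      (Matrix.of fun x y => {w | C.classOf (x, w) = S ∧ C.classOf (w, y) = T}.ncard) := by
  intro p q hpq
  simp only [Matrix.of_apply]
  by_cases hST : S ∈ C.classes ∧ T ∈ C.classes
  · simp only [classOf_eq_iff hST.1, classOf_eq_iff hST.2]
    exact C.inter S hST.1 T hST.2 _ (C.classOf_mem p) p (C.mem_classOf p) q
      (hpq ▸ C.mem_classOf q)
  · have hempty : ∀ x y : V, {w | C.classOf (x, w) = S ∧ C.classOf (w, y) = T} = ∅ := by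
      refine fun x y => Set.eq_empty_of_forall_notMem fun w ⟨hS, hT⟩ => hST ?_
      exact ⟨hS ▸ C.classOf_mem _, hT ▸ C.classOf_mem _⟩
    rw [hempty, hempty]

theorem IsInvariant.mul {M N : Matrix V V ℕ} (hM : C.IsInvariant M) (hN : C.IsInvariant N) :
    C.IsInvariant (M * N) := by
  classical
  intro p q hpq
  have : Nonempty (V × V) := ⟨p⟩
  let rep := Function.invFun C.classOf
  have hrep : ∀ M : Matrix V V ℕ, C.IsInvariant M → ∀ x y,
      M x y = M (rep (C.classOf (x, y))).1 (rep (C.classOf (x, y))).2 :=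
    fun M hM x y => hM (x, y) _ (Function.invFun_eq ⟨(x, y), rfl⟩).symm
  let φ (ST : Set (V × V) × Set (V × V)) : ℕ :=
    M (rep ST.1).1 (rep ST.1).2 * N (rep ST.2).1 (rep ST.2).2
  -- group the `w` in `(M * N) x y = ∑ w, M x w * N w y` by the basis relations of `(x, w)` and
  -- `(w, y)`; the group sizes are intersection numbers
  have hsum : ∀ x y, (M * N) x y = ∑ ST : Set (V × V) × Set (V × V),
      {w | C.classOf (x, w) = ST.1 ∧ C.classOf (w, y) = ST.2}.ncard * φ ST := by
    intro x y
    have : (M * N) x y = ∑ w, φ (C.classOf (x, w), C.classOf (w, y)) := by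
      simp only [Matrix.mul_apply, φ, ← hrep M hM, ← hrep N hN]
    rw [this, ← Finset.sum_fiberwise' Finset.univ _ φ]
    refine Finset.sum_congr rfl fun ST _ => ?_
    rw [Finset.sum_const, smul_eq_mul, Set.ncard_eq_toFinset_card', Set.toFinset_ofPred]
    simp only [Prod.ext_iff]
  rw [hsum, hsum]
  refine Finset.sum_congr rfl fun ST _ => ?_
  congr 1
  exact isInvariant_ncard_classOf ST.1 ST.2 p q hpq

end AssocScheme

section Quotient

variable {V : Type*} {E : Set (V × V)}

theorem eq_setOf_of_mem_classesOf (hE : Equivalence fun u v : V => (u, v) ∈ E) {X : Set V}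
    (hX : X ∈ classesOf E) {x : V} (hx : x ∈ X) : X = {v | (x, v) ∈ E} := by
  obtain ⟨a, rfl⟩ := hX
  ext v
  exact ⟨fun h => hE.trans (hE.symm hx) h, hE.trans hx⟩

def classPair (E : Set (V × V)) (p : V × V) : Set V × Set V :=
  ({v | (p.1, v) ∈ E}, {v | (p.2, v) ∈ E})

theorem classPair_image_eq_quotRel (hE : Equivalence fun u v : V => (u, v) ∈ E)
    (R : Set (V × V)) : classPair E '' R = quotRel E R := by
  ext ⟨X, Y⟩
  constructor
  · rintro ⟨p, hp, hpq⟩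
    simp only [classPair, Prod.mk.injEq] at hpq
    obtain ⟨rfl, rfl⟩ := hpq
    exact ⟨⟨p.1, rfl⟩, ⟨p.2, rfl⟩, p, hp, hE.refl p.1, hE.refl p.2⟩
  · rintro ⟨hX, hY, ⟨x, y⟩, hxy, hx, hy⟩
    exact ⟨(x, y), hxy, Prod.ext (eq_setOf_of_mem_classesOf hE hX hx).symm
      (eq_setOf_of_mem_classesOf hE hY hy).symm⟩

theorem setOf_classPair_eq_inter_prod (hE : Equivalence fun u v : V => (u, v) ∈ E)
    (R : Set (V × V)) {X Y : Set V} (hX : X ∈ classesOf E) (hY : Y ∈ classesOf E) :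
    {p ∈ R | classPair E p = (X, Y)} = R ∩ X ×ˢ Y := by
  ext p
  simp only [classPair, Set.mem_ofPred_eq, Set.mem_inter_iff, Set.mem_prod, Prod.mk.injEq]
  refine and_congr_right fun _ => ⟨?_, ?_⟩
  · rintro ⟨rfl, rfl⟩
    exact ⟨hE.refl p.1, hE.refl p.2⟩
  · rintro ⟨hx, hy⟩
    exact ⟨(eq_setOf_of_mem_classesOf hE hX hx).symm, (eq_setOf_of_mem_classesOf hE hY hy).symm⟩

theorem ncard_inter_prod_eq_relMatrix_mul_mul_apply [Fintype V]
    (hE : Equivalence fun u v : V => (u, v) ∈ E) (R : Set (V × V)) {X Y : Set V}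
    (hX : X ∈ classesOf E) (hY : Y ∈ classesOf E) {x y : V} (hx : x ∈ X) (hy : y ∈ Y) :
    (R ∩ X ×ˢ Y).ncard = (relMatrix E * relMatrix R * relMatrix E) x y := by
  rw [relMatrix_mul_mul_apply, eq_setOf_of_mem_classesOf hE hX hx,
    eq_setOf_of_mem_classesOf hE hY hy]
  congr 1
  ext p
  simp only [Set.mem_inter_iff, Set.mem_prod, Set.mem_ofPred_eq]
  exact ⟨fun ⟨hp, h1, h2⟩ => ⟨h1, hp, hE.symm h2⟩, fun ⟨h1, hp, h2⟩ => ⟨hp, h1, hE.symm h2⟩⟩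

end Quotient

theorem IsSchemeEquiv.ncard_inter_prod_eq {V : Type*} [Fintype V] {C : AssocScheme V}
    {E : Set (V × V)} (hE : IsSchemeEquiv C E) {R : Set (V × V)} (hR : R ∈ C.classes)
    {X Y X' Y' : Set V} (hX : X ∈ classesOf E) (hY : Y ∈ classesOf E)
    (hX' : X' ∈ classesOf E) (hY' : Y' ∈ classesOf E)
    (hXY : (R ∩ X ×ˢ Y).Nonempty) (hXY' : (R ∩ X' ×ˢ Y').Nonempty) :
    (R ∩ X ×ˢ Y).ncard = (R ∩ X' ×ˢ Y').ncard := by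
  obtain ⟨⟨D, hD, rfl⟩, hEq⟩ := hE
  obtain ⟨⟨x, y⟩, hxy, hx, hy⟩ := hXY
  obtain ⟨⟨x', y'⟩, hxy', hx', hy'⟩ := hXY'
  rw [ncard_inter_prod_eq_relMatrix_mul_mul_apply hEq R hX hY hx hy,
    ncard_inter_prod_eq_relMatrix_mul_mul_apply hEq R hX' hY' hx' hy']
  have hinv := ((AssocScheme.isInvariant_relMatrix hD).mul
    (AssocScheme.isInvariant_relMatrix (D := {R}) (Set.singleton_subset_iff.2 hR))).mul
    (AssocScheme.isInvariant_relMatrix hD)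
  rw [Set.sUnion_singleton] at hinv
  exact hinv (x, y) (x', y') <|
    ((AssocScheme.classOf_eq_iff hR).2 hxy).trans ((AssocScheme.classOf_eq_iff hR).2 hxy').symm

/-- `|R| = |R_{V/E}| · |R_{X,Y}|` for any classes `X, Y` of a scheme equivalence
`E` with `R_{X,Y} ≠ ∅`. -/
theorem card_eq_quot_mul_block {V : Type*} [Fintype V] (C : AssocScheme V)
    {E : Set (V × V)} (hE : IsSchemeEquiv C E) :
    ∀ R ∈ C.classes, ∀ X ∈ classesOf E, ∀ Y ∈ classesOf E,
      (R ∩ X ×ˢ Y).Nonempty →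
        R.ncard = (quotRel E R).ncard * (R ∩ X ×ˢ Y).ncard := by
  intro R hR X hX Y hY hXY
  rw [← classPair_image_eq_quotRel hE.2]
  refine Set.ncard_eq_ncard_image_mul fun q hq => ?_
  rw [classPair_image_eq_quotRel hE.2] at hq
  obtain ⟨hq₁, hq₂, hq⟩ := hq
  rw [setOf_classPair_eq_inter_prod hE.2 R hq₁ hq₂]
  exact hE.ncard_inter_prod_eq hR hq₁ hq₂ hX hY hq hXY
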